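/- Let m ≥ 2 and n be positive integers, and for each i ∈ [m] let R_i be a nonempty subset of [n]. Fix an index i_0 with max(R_{i_0}) = max_i max(R_i), set k_1 = max(R_{i_0}) and k_2 = max_{i ≠ i_0} max(R_i), and assume n ≥ k_1 + k_2. Let F_1 ⊆ binom([n],R_1), ..., F_m ⊆ binom([n],R_m) be monotone, left-compressed, non-empty cross-intersecting families whose total size Σ_{j=1}^m |F_j| is maximal among all non-empty cross-intersecting tuples (F'_1 ⊆ binom([n],R_1), ..., F'_m ⊆ binom([n],R_m)). Let G_j be the generating family of F_j and let l be the maximum of the extents of F_1, ..., F_m. If 1 < u ≤ l and there exist i ∈ [m] and E ∈ G_i with |E| = u and l ∈ E, then there exist j ∈ [m]\{i} and F ∈ G_j with |F| = l + 1 − u and l ∈ F; moreover, for any E ∈ G_i and F ∈ G_j with j ≠ i and E ∩ F = {l}, one has E ∪ F = [l] and |E| + |F| = l + 1. -/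

import Mathlib

/-!
Every generating set lies in `[l]`. Suppose `E ∈ G_i` and `G ∈ G_j` meet exactly in `l` but miss
some `t < l`. Left-compression lets us replace `l` by `t` in `E`, and the shifted set is disjoint
from `G`. Since `k_i + k_j ≤ n`, the up-sets of two disjoint sets of sizes at most `k_i` and `k_j`
contain disjoint members, contradicting cross-intersection; hence `E ∪ G = [l]`.

For the existence part, `E \ {l}` does not generate, so some `T ⊇ E \ {l}` of admissible size is
missing from `F_i`. By maximality `T` cannot be added to `F_i`, so it is disjoint from some
`B ∈ F_j`, and a generating set `G ⊆ B` of `F_j` meets `E` exactly in `{l}`.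
-/

open Finset

/-- binom([n],R): all subsets of [n] = {1,...,n} whose cardinality lies in R. -/
def famR (n : ℕ) (R : Finset ℕ) : Finset (Finset ℕ) :=
  (Finset.Icc 1 n).powerset.filter (fun A => A.card ∈ R)

/-- The up-set ⟨E⟩_R of E inside binom([n],R). -/
def upSet (n : ℕ) (R : Finset ℕ) (E : Finset ℕ) : Finset (Finset ℕ) :=
  (famR n R).filter (fun A => E ⊆ A)

/-- F ⊆ binom([n],R) is monotone. -/
def MonotoneFam (n : ℕ) (R : Finset ℕ) (F : Finset (Finset ℕ)) : Prop :=
  ∀ A ∈ F, ∀ B, A ⊆ B → B ⊆ Finset.Icc 1 n → B.card ∈ R → B ∈ F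

/-- The shift s_{i,j} applied to a member A of F. -/
def shiftSet (F : Finset (Finset ℕ)) (i j : ℕ) (A : Finset ℕ) : Finset ℕ :=
  if j ∈ A ∧ i ∉ A ∧ insert i (A.erase j) ∉ F then insert i (A.erase j) else A

/-- The shift s_{i,j} applied to the family F. -/
def shiftFam (i j : ℕ) (F : Finset (Finset ℕ)) : Finset (Finset ℕ) :=
  F.image (shiftSet F i j)

/-- F is left-compressed: s_{i,j}(F) = F for all 1 ≤ i < j ≤ n. -/
def LeftCompressed (n : ℕ) (F : Finset (Finset ℕ)) : Prop :=
  ∀ i j, 1 ≤ i → i < j → j ≤ n → shiftFam i j F = F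

/-- E is a generating set of the monotone family F ⊆ binom([n],R). -/
def IsGenSet (n : ℕ) (R : Finset ℕ) (F : Finset (Finset ℕ)) (E : Finset ℕ) : Prop :=
  E ⊆ Finset.Icc 1 n ∧ E.card ≤ R.sup id ∧ upSet n R E ⊆ F ∧
    ∀ E', E' ⊂ E → ¬ upSet n R E' ⊆ F

lemma mem_famR {n : ℕ} {R A : Finset ℕ} : A ∈ famR n R ↔ A ⊆ Icc 1 n ∧ A.card ∈ R := by
  simp [famR]

lemma mem_upSet {n : ℕ} {R E A : Finset ℕ} :
    A ∈ upSet n R E ↔ A ⊆ Icc 1 n ∧ A.card ∈ R ∧ E ⊆ A := by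
  simp [upSet, mem_famR, and_assoc]

lemma sup_id_mem {R : Finset ℕ} (hR : R.Nonempty) : R.sup id ∈ R := by
  simpa using sup_mem_of_nonempty (f := id) hR

section Families

variable {n : ℕ} {R : Finset ℕ} {F : Finset (Finset ℕ)}

lemma MonotoneFam.upSet_subset (hmono : MonotoneFam n R F) {A : Finset ℕ} (hA : A ∈ F) :
    upSet n R A ⊆ F := fun B hB => by
  obtain ⟨hBn, hBR, hAB⟩ := mem_upSet.1 hB
  exact hmono A hA B hAB hBn hBR

lemma MonotoneFam.exists_isGenSet_subset (hF : F ⊆ famR n R) (hmono : MonotoneFam n R F)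
    {B : Finset ℕ} (hB : B ∈ F) : ∃ G ⊆ B, IsGenSet n R F G := by
  obtain ⟨G, hGB, hG⟩ :=
    exists_minimal_le_of_wellFoundedLT (fun S => upSet n R S ⊆ F) B (hmono.upSet_subset hB)
  obtain ⟨hBn, hBR⟩ := mem_famR.1 (hF hB)
  exact ⟨G, hGB, hGB.trans hBn, (card_le_card hGB).trans (le_sup (f := id) hBR), hG.prop,
    fun _ hlt => hG.not_prop_of_lt hlt⟩

lemma LeftCompressed.insert_erase_mem (hlc : LeftCompressed n F) {s t : ℕ} (hs : 1 ≤ s)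
    (hst : s < t) (htn : t ≤ n) {A : Finset ℕ} (hA : A ∈ F) (htA : t ∈ A) (hsA : s ∉ A) :
    insert s (A.erase t) ∈ F := by
  by_contra hnot
  have hshift : shiftSet F s t A = insert s (A.erase t) := if_pos ⟨htA, hsA, hnot⟩
  exact hnot (hlc s t hs hst htn ▸ mem_image.2 ⟨A, hA, hshift⟩)

lemma LeftCompressed.upSet_insert_erase_subset (hlc : LeftCompressed n F) {s t : ℕ} (hs : 1 ≤ s)
    (hst : s < t) (htn : t ≤ n) {E : Finset ℕ} (hsE : s ∉ E)
    (hup : upSet n R E ⊆ F) : upSet n R (insert s (E.erase t)) ⊆ F := by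
  intro A hA
  obtain ⟨hAn, hAR, hEA⟩ := mem_upSet.1 hA
  have hsA : s ∈ A := hEA (mem_insert_self s _)
  have hEA' : E.erase t ⊆ A := (subset_insert s _).trans hEA
  by_cases htA : t ∈ A
  · exact hup (mem_upSet.2 ⟨hAn, hAR, fun x hx =>
      if hxt : x = t then hxt ▸ htA else hEA' (mem_erase.2 ⟨hxt, hx⟩)⟩)
  -- Otherwise shift `A` back: `A' = A - s + t` contains `E`, and compressing `A'` returns `A`.
  set A' := insert t (A.erase s) with hA'
  have htA' : t ∉ A.erase s := fun h => htA (mem_of_mem_erase h)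
  have hsA' : s ∉ A' := by simp [hA', hst.ne]
  have hA'F : A' ∈ F := by
    refine hup (mem_upSet.2 ⟨?_, ?_, fun x hx => ?_⟩)
    · exact insert_subset (mem_Icc.2 ⟨by omega, htn⟩) ((erase_subset s A).trans hAn)
    · rwa [card_insert_of_notMem htA', card_erase_add_one hsA]
    · by_cases hxt : x = t
      · exact hxt ▸ mem_insert_self t _
      · exact mem_insert_of_mem (mem_erase.2 ⟨fun h => hsE (h ▸ hx), hEA' (mem_erase.2 ⟨hxt, hx⟩)⟩)
  have hback : insert s (A'.erase t) = A := by
    rw [hA', erase_insert htA', insert_erase hsA]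
  exact hback ▸ hlc.insert_erase_mem hs hst htn hA'F (mem_insert_self t _) hsA'

end Families

lemma exists_disjoint_supersets_card_eq {α : Type*} [DecidableEq α] {U S T : Finset α} {a b : ℕ}
    (hS : S ⊆ U) (hT : T ⊆ U) (hST : Disjoint S T) (hSa : S.card ≤ a) (hTb : T.card ≤ b)
    (hab : a + b ≤ U.card) :
    ∃ A C, S ⊆ A ∧ T ⊆ C ∧ A ⊆ U ∧ C ⊆ U ∧ Disjoint A C ∧ A.card = a ∧ C.card = b := by
  have hSUT : S ⊆ U \ T := subset_sdiff.2 ⟨hS, hST⟩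
  obtain ⟨A, hSA, hAUT, hAa⟩ := exists_subsuperset_card_eq hSUT hSa (by
    rw [card_sdiff_of_subset hT]; omega)
  have hAU : A ⊆ U := hAUT.trans sdiff_subset
  have hTUA : T ⊆ U \ A := subset_sdiff.2 ⟨hT, disjoint_of_subset_right hAUT disjoint_sdiff⟩
  obtain ⟨C, hTC, hCUA, hCb⟩ := exists_subsuperset_card_eq hTUA hTb (by
    rw [card_sdiff_of_subset hAU]; omega)
  exact ⟨A, C, hSA, hTC, hAU, hCUA.trans sdiff_subset,
    disjoint_of_subset_right hCUA disjoint_sdiff, hAa, hCb⟩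

lemma inter_nonempty_of_upSet_subset {n : ℕ} {R₁ R₂ S₁ S₂ : Finset ℕ}
    {F₁ F₂ : Finset (Finset ℕ)} (hR₁ : R₁.Nonempty) (hR₂ : R₂.Nonempty)
    (hn : R₁.sup id + R₂.sup id ≤ n) (hcross : ∀ A ∈ F₁, ∀ B ∈ F₂, (A ∩ B).Nonempty)
    (hS₁ : S₁ ⊆ Icc 1 n) (hS₂ : S₂ ⊆ Icc 1 n)
    (hS₁card : S₁.card ≤ R₁.sup id) (hS₂card : S₂.card ≤ R₂.sup id)
    (hup₁ : upSet n R₁ S₁ ⊆ F₁) (hup₂ : upSet n R₂ S₂ ⊆ F₂) : (S₁ ∩ S₂).Nonempty := by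
  rw [← not_disjoint_iff_nonempty_inter]
  intro hdisj
  obtain ⟨A, C, hSA, hSC, hAn, hCn, hAC, hAcard, hCcard⟩ :=
    exists_disjoint_supersets_card_eq hS₁ hS₂ hdisj hS₁card hS₂card (by simpa using hn)
  have hA : A ∈ F₁ := hup₁ (mem_upSet.2 ⟨hAn, hAcard ▸ sup_id_mem hR₁, hSA⟩)
  have hC : C ∈ F₂ := hup₂ (mem_upSet.2 ⟨hCn, hCcard ▸ sup_id_mem hR₂, hSC⟩)
  exact not_disjoint_iff_nonempty_inter.2 (hcross A hA C hC) hAC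

lemma add_le_of_isGreatest_of_ne {ι : Type*} {k : ι → ℕ} {i0 : ι} {k2 n : ℕ}
    (hi0 : ∀ i, k i ≤ k i0) (hk2 : IsGreatest {x | ∃ i, i ≠ i0 ∧ x = k i} k2)
    (hn : k i0 + k2 ≤ n) {i j : ι} (hij : i ≠ j) : k i + k j ≤ n := by
  by_cases hi : i = i0
  · subst hi
    have := hk2.2 ⟨j, hij.symm, rfl⟩
    omega
  · have := hk2.2 ⟨i, hi, rfl⟩
    have := hi0 j
    omega

lemma Icc_subset_union_of_inter_eq_singleton {n l : ℕ} {R₁ R₂ E G : Finset ℕ}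
    {F₁ F₂ : Finset (Finset ℕ)} (hR₁ : R₁.Nonempty) (hR₂ : R₂.Nonempty)
    (hn : R₁.sup id + R₂.sup id ≤ n) (hcross : ∀ A ∈ F₁, ∀ B ∈ F₂, (A ∩ B).Nonempty)
    (hlc : LeftCompressed n F₁) (hE : IsGenSet n R₁ F₁ E) (hG : IsGenSet n R₂ F₂ G)
    (hEG : E ∩ G = {l}) : Icc 1 l ⊆ E ∪ G := by
  have hlEG : l ∈ E ∩ G := hEG ▸ mem_singleton_self l
  have hlE : l ∈ E := (mem_inter.1 hlEG).1
  have hln : l ≤ n := (mem_Icc.1 (hE.1 hlE)).2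
  intro t ht
  by_contra htEG
  obtain ⟨htE, htG⟩ : t ∉ E ∧ t ∉ G := by simpa using htEG
  obtain ⟨ht1, htl⟩ := mem_Icc.1 ht
  have htl : t < l := lt_of_le_of_ne htl fun h => htE (h ▸ hlE)
  have hshift_n : insert t (E.erase l) ⊆ Icc 1 n :=
    insert_subset (mem_Icc.2 ⟨ht1, by omega⟩) ((erase_subset l E).trans hE.1)
  have hshift_card : (insert t (E.erase l)).card ≤ R₁.sup id := by
    rw [card_insert_of_notMem fun h => htE (mem_of_mem_erase h), card_erase_add_one hlE]
    exact hE.2.1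
  obtain ⟨x, hx⟩ := inter_nonempty_of_upSet_subset hR₁ hR₂ hn hcross hshift_n hG.1 hshift_card
    hG.2.1 (hlc.upSet_insert_erase_subset ht1 htl hln htE hE.2.2.1) hG.2.2.1
  obtain ⟨hxshift, hxG⟩ := mem_inter.1 hx
  rcases mem_insert.1 hxshift with rfl | hxE
  · exact htG hxG
  · obtain ⟨hxl, hxE⟩ := mem_erase.1 hxE
    exact hxl (mem_singleton.1 (hEG ▸ mem_inter.2 ⟨hxE, hxG⟩))

lemma card_add_card_of_union_eq_Icc {l : ℕ} {E G : Finset ℕ} (hunion : E ∪ G = Icc 1 l)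
    (hinter : E ∩ G = {l}) : E.card + G.card = l + 1 := by
  have := card_union_add_card_inter E G
  rw [hunion, hinter, Nat.card_Icc, card_singleton] at this
  omega

lemma mem_update_insert_iff {ι : Type*} [DecidableEq ι] {F : ι → Finset (Finset ℕ)} {i a : ι}
    {T A : Finset ℕ} :
    A ∈ Function.update F i (insert T (F i)) a ↔ A ∈ F a ∨ (a = i ∧ A = T) := by
  by_cases ha : a = i
  · subst ha
    simp [or_comm]
  · simp [ha]

lemma exists_disjoint_of_notMem_of_maximal {ι : Type*} [Fintype ι] [DecidableEq ι] {n : ℕ}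
    {R : ι → Finset ℕ} {F : ι → Finset (Finset ℕ)} (hF : ∀ i, F i ⊆ famR n (R i))
    (hFne : ∀ i, (F i).Nonempty)
    (hcross : ∀ i j, i ≠ j → ∀ A ∈ F i, ∀ B ∈ F j, (A ∩ B).Nonempty)
    (hmax : ∀ F' : ι → Finset (Finset ℕ),
      (∀ i, F' i ⊆ famR n (R i)) → (∀ i, (F' i).Nonempty) →
      (∀ i j, i ≠ j → ∀ A ∈ F' i, ∀ B ∈ F' j, (A ∩ B).Nonempty) →
      ∑ j, (F' j).card ≤ ∑ j, (F j).card)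
    {i : ι} {T : Finset ℕ} (hT : T ∈ famR n (R i)) (hTF : T ∉ F i) :
    ∃ j, j ≠ i ∧ ∃ B ∈ F j, Disjoint B T := by
  by_contra! hmeet
  set F' := Function.update F i (insert T (F i))
  have hFF' : ∀ a, F a ⊆ F' a := fun a A hA => mem_update_insert_iff.2 (Or.inl hA)
  have hF' : ∀ a, F' a ⊆ famR n (R a) := by
    intro a A hA
    rcases mem_update_insert_iff.1 hA with hA | ⟨rfl, rfl⟩
    exacts [hF a hA, hT]
  have hcross' : ∀ a b, a ≠ b → ∀ A ∈ F' a, ∀ B ∈ F' b, (A ∩ B).Nonempty := by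
    intro a b hab A hA B hB
    rcases mem_update_insert_iff.1 hA with hAF | ⟨rfl, rfl⟩ <;>
      rcases mem_update_insert_iff.1 hB with hBF | ⟨rfl, rfl⟩
    · exact hcross a b hab A hAF B hBF
    · exact not_disjoint_iff_nonempty_inter.1 (hmeet a hab A hAF)
    · exact inter_comm B A ▸ not_disjoint_iff_nonempty_inter.1 (hmeet b hab.symm B hBF)
    · exact absurd rfl hab
  have hgrow : ∑ j, (F j).card < ∑ j, (F' j).card :=
    sum_lt_sum (fun a _ => card_le_card (hFF' a))
      ⟨i, mem_univ i, by simpa [F'] using card_lt_card (ssubset_insert hTF)⟩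
  exact hgrow.not_ge (hmax F' hF' (fun a => (hFne a).mono (hFF' a)) hcross')

theorem stmt11_general (m n : ℕ)
    (R : Fin m → Finset ℕ) (hRne : ∀ i, (R i).Nonempty)
    (i0 : Fin m) (hi0 : ∀ i, (R i).sup id ≤ (R i0).sup id)
    (k2 : ℕ) (hk2 : IsGreatest {x | ∃ i, i ≠ i0 ∧ x = (R i).sup id} k2)
    (hn2 : (R i0).sup id + k2 ≤ n)
    (F : Fin m → Finset (Finset ℕ))
    (hF : ∀ i, F i ⊆ famR n (R i))
    (hFne : ∀ i, (F i).Nonempty)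
    (hmono : ∀ i, MonotoneFam n (R i) (F i))
    (hlc : ∀ i, LeftCompressed n (F i))
    (hcross : ∀ i j, i ≠ j → ∀ A ∈ F i, ∀ B ∈ F j, (A ∩ B).Nonempty)
    (hmax : ∀ F' : Fin m → Finset (Finset ℕ),
      (∀ i, F' i ⊆ famR n (R i)) → (∀ i, (F' i).Nonempty) →
      (∀ i j, i ≠ j → ∀ A ∈ F' i, ∀ B ∈ F' j, (A ∩ B).Nonempty) →
      ∑ j, (F' j).card ≤ ∑ j, (F j).card)
    (l : ℕ) (hl : IsGreatest {x | ∃ i E, IsGenSet n (R i) (F i) E ∧ x ∈ E} l)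
    (u : ℕ)
    (i : Fin m) (E : Finset ℕ)
    (hE : IsGenSet n (R i) (F i) E) (hEcard : E.card = u) (hEl : l ∈ E) :
    (∃ j, j ≠ i ∧ ∃ G, IsGenSet n (R j) (F j) G ∧ G.card = l + 1 - u ∧ l ∈ G) ∧
    (∀ j, j ≠ i → ∀ E' G, IsGenSet n (R i) (F i) E' → IsGenSet n (R j) (F j) G →
      E' ∩ G = {l} → E' ∪ G = Finset.Icc 1 l ∧ E'.card + G.card = l + 1) := by
  have hsum {a b : Fin m} (hab : a ≠ b) : (R a).sup id + (R b).sup id ≤ n :=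
    add_le_of_isGreatest_of_ne (k := fun a => (R a).sup id) hi0 hk2 hn2 hab
  have hgen_Icc {j : Fin m} {G : Finset ℕ} (hG : IsGenSet n (R j) (F j) G) : G ⊆ Icc 1 l :=
    fun x hx => mem_Icc.2 ⟨(mem_Icc.1 (hG.1 hx)).1, hl.2 ⟨j, G, hG, hx⟩⟩
  have hunion : ∀ j, j ≠ i → ∀ E' G, IsGenSet n (R i) (F i) E' → IsGenSet n (R j) (F j) G →
      E' ∩ G = {l} → E' ∪ G = Icc 1 l ∧ E'.card + G.card = l + 1 := by
    intro j hj E' G hE' hG hEG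
    have h := (union_subset (hgen_Icc hE') (hgen_Icc hG)).antisymm <|
      Icc_subset_union_of_inter_eq_singleton (hRne i) (hRne j) (hsum hj.symm) (hcross i j hj.symm)
        (hlc i) hE' hG hEG
    exact ⟨h, card_add_card_of_union_eq_Icc h hEG⟩
  refine ⟨?_, hunion⟩
  obtain ⟨T, hTup, hTF⟩ := not_subset.1 (hE.2.2.2 _ (erase_ssubset hEl))
  obtain ⟨hTn, hTR, hET⟩ := mem_upSet.1 hTup
  obtain ⟨j, hj, B, hB, hBT⟩ :=
    exists_disjoint_of_notMem_of_maximal hF hFne hcross hmax (mem_famR.2 ⟨hTn, hTR⟩) hTF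
  obtain ⟨G, hGB, hG⟩ := (hmono j).exists_isGenSet_subset (hF j) hB
  have hEG : E ∩ G = {l} := by
    refine (inter_nonempty_of_upSet_subset (hRne i) (hRne j) (hsum hj.symm) (hcross i j hj.symm)
      hE.1 hG.1 hE.2.1 hG.2.1 hE.2.2.1 hG.2.2.1).subset_singleton_iff.1
      fun x hx => mem_singleton.2 ?_
    obtain ⟨hxE, hxG⟩ := mem_inter.1 hx
    by_contra hxl
    exact disjoint_left.1 hBT (hGB hxG) (hET (mem_erase.2 ⟨hxl, hxE⟩))
  have hcard := (hunion j hj E G hE hG hEG).2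
  exact ⟨j, hj, G, hG, by omega, (mem_inter.1 (hEG ▸ mem_singleton_self l)).2⟩

theorem stmt11 (m n : ℕ) (hm : 2 ≤ m) (hn : 1 ≤ n)
    (R : Fin m → Finset ℕ) (hRne : ∀ i, (R i).Nonempty)
    (hRsub : ∀ i, R i ⊆ Finset.Icc 1 n)
    (i0 : Fin m) (hi0 : ∀ i, (R i).sup id ≤ (R i0).sup id)
    (k2 : ℕ) (hk2 : IsGreatest {x | ∃ i, i ≠ i0 ∧ x = (R i).sup id} k2)
    (hn2 : (R i0).sup id + k2 ≤ n)
    (F : Fin m → Finset (Finset ℕ))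
    (hF : ∀ i, F i ⊆ famR n (R i))
    (hFne : ∀ i, (F i).Nonempty)
    (hmono : ∀ i, MonotoneFam n (R i) (F i))
    (hlc : ∀ i, LeftCompressed n (F i))
    (hcross : ∀ i j, i ≠ j → ∀ A ∈ F i, ∀ B ∈ F j, (A ∩ B).Nonempty)
    (hmax : ∀ F' : Fin m → Finset (Finset ℕ),
      (∀ i, F' i ⊆ famR n (R i)) → (∀ i, (F' i).Nonempty) →
      (∀ i j, i ≠ j → ∀ A ∈ F' i, ∀ B ∈ F' j, (A ∩ B).Nonempty) →
      ∑ j, (F' j).card ≤ ∑ j, (F j).card)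
    (l : ℕ) (hl : IsGreatest {x | ∃ i E, IsGenSet n (R i) (F i) E ∧ x ∈ E} l)
    (u : ℕ) (hu : 1 < u) (hul : u ≤ l)
    (i : Fin m) (E : Finset ℕ)
    (hE : IsGenSet n (R i) (F i) E) (hEcard : E.card = u) (hEl : l ∈ E) :
    (∃ j, j ≠ i ∧ ∃ G, IsGenSet n (R j) (F j) G ∧ G.card = l + 1 - u ∧ l ∈ G) ∧
    (∀ j, j ≠ i → ∀ E' G, IsGenSet n (R i) (F i) E' → IsGenSet n (R j) (F j) G →
      E' ∩ G = {l} → E' ∪ G = Finset.Icc 1 l ∧ E'.card + G.card = l + 1) :=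
  stmt11_general m n R hRne i0 hi0 k2 hk2 hn2 F hF hFne hmono hlc hcross hmax l hl u i E hE hEcard
    hEl
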